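/- arXiv:quant-ph/0408103 — 6 statements merged into one kernel-verified Lean document; each statement's English description precedes it below -/
import Mathlib

section
/- Let ℰ have Kraus representation ℰ(γ) = Σ_k A_k γ A_k†. Then the operator Θ(ℰ,p) = ℰ̂^⊗p(L_p)·R_p equals Σ_{k₁,...,k_p} A_{k₁}† A_{k₂} ⊗ A_{k₂}† A_{k₃} ⊗ ⋯ ⊗ A_{k_p}† A_{k₁}. -/
/-!
Each summand of `Ω(ℰ,p) R_p` is `A_k^{†⊗} (L_p A_k^{⊗} R_p)`. Conjugating a tensor product by the
cyclic shift rotates its factors, and tensor products multiply factorwise, which gives the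
product `A_{k_i}† A_{k_{i+1}}` in slot `i`.
-/

open Matrix BigOperators

/-- Tensor product of a family of operators, in the function-index
representation of `ℋ^⊗p`. -/
noncomputable def tensorFamily (p : ℕ) {n : Type*} [Fintype n]
    (B : Fin p → Matrix n n ℂ) : Matrix (Fin p → n) (Fin p → n) ℂ :=
  Matrix.of fun x y => ∏ i, B i (x i) (y i)

/-- The left cyclic shift `L_p` on `ℋ^⊗p`. -/
noncomputable def leftShift (p d : ℕ) [NeZero p] :
    Matrix (Fin p → Fin d) (Fin p → Fin d) ℂ :=
  Matrix.of fun x y => if ∀ i, x i = y (i + 1) then 1 else 0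

/-- The right cyclic shift `R_p = L_p†` on `ℋ^⊗p`:
`R_p |ξ₁ ⋯ ξ_p⟩ = |ξ_p ξ₁ ⋯ ξ_{p-1}⟩`. -/
noncomputable def rightShift (p d : ℕ) [NeZero p] :
    Matrix (Fin p → Fin d) (Fin p → Fin d) ℂ :=
  Matrix.of fun x y => if ∀ i, x i = y (i - 1) then 1 else 0

/-- `Ω(ℰ,p) = ℰ̂^{⊗p}(L_p)` where `ℰ̂(B) = Σ_k A_k† B A_k`. -/
noncomputable def Omega (p d : ℕ) [NeZero p] {ι : Type*} [Fintype ι]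
    (A : ι → Matrix (Fin d) (Fin d) ℂ) :
    Matrix (Fin p → Fin d) (Fin p → Fin d) ℂ :=
  ∑ k : Fin p → ι,
    tensorFamily p (fun i => (A (k i))ᴴ) * leftShift p d *
      tensorFamily p (fun i => A (k i))

theorem tensorFamily_mul_tensorFamily (p : ℕ) {n : Type*} [Fintype n]
    (B C : Fin p → Matrix n n ℂ) :
    tensorFamily p B * tensorFamily p C = tensorFamily p (fun i => B i * C i) := by
  ext x y
  simp only [tensorFamily, mul_apply, of_apply, Finset.prod_univ_sum, Fintype.piFinset_univ,
    Finset.prod_mul_distrib]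

section Shifts

variable (p d : ℕ) [NeZero p]

theorem leftShift_mul_apply (M : Matrix (Fin p → Fin d) (Fin p → Fin d) ℂ)
    (x y : Fin p → Fin d) :
    (leftShift p d * M) x y = M (fun i => x (i - 1)) y := by
  rw [mul_apply, Finset.sum_eq_single (fun i => x (i - 1))]
  · simp [leftShift]
  · intro z _ hz
    refine mul_eq_zero_of_left (if_neg fun h => hz (funext fun i => ?_)) _
    simpa using (h (i - 1)).symm
  · simp

theorem mul_rightShift_apply (M : Matrix (Fin p → Fin d) (Fin p → Fin d) ℂ)
    (x y : Fin p → Fin d) :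
    (M * rightShift p d) x y = M x (fun i => y (i - 1)) := by
  rw [mul_apply, Finset.sum_eq_single (fun i => y (i - 1))]
  · simp [rightShift]
  · intro z _ hz
    exact mul_eq_zero_of_right _ (if_neg fun h => hz (funext h))
  · simp

theorem leftShift_mul_tensorFamily_mul_rightShift (B : Fin p → Matrix (Fin d) (Fin d) ℂ) :
    leftShift p d * tensorFamily p B * rightShift p d = tensorFamily p (fun i => B (i + 1)) := by
  ext x y
  simp only [mul_rightShift_apply, leftShift_mul_apply, tensorFamily, of_apply]
  exact Fintype.prod_equiv (Equiv.subRight 1) _ _ fun i => by simp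

end Shifts

/-- `Θ(ℰ,p) = ℰ̂^{⊗p}(L_p)·R_p
  = Σ_{k₁,…,k_p} A_{k₁}†A_{k₂} ⊗ A_{k₂}†A_{k₃} ⊗ ⋯ ⊗ A_{k_p}†A_{k₁}`. -/
theorem Omega_mul_rightShift_eq (p d : ℕ) [NeZero p] {ι : Type*} [Fintype ι]
    (A : ι → Matrix (Fin d) (Fin d) ℂ) :
    Omega p d A * rightShift p d =
      ∑ k : Fin p → ι,
        tensorFamily p (fun i => (A (k i))ᴴ * A (k (i + 1))) := by
  rw [Omega, Finset.sum_mul]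
  refine Finset.sum_congr rfl fun k _ => ?_
  rw [Matrix.mul_assoc, Matrix.mul_assoc, ← Matrix.mul_assoc (leftShift p d),
    leftShift_mul_tensorFamily_mul_rightShift, tensorFamily_mul_tensorFamily]
end

section
/- For any CPT map ℰ, integers m, p ≥ 1 and any unit vector |Ψ⟩ ∈ ℋ^⊗m, Tr[(ℰ^⊗m(|Ψ⟩⟨Ψ|))^p] ≤ ‖Ω(ℰ,p)‖_∞^m, where ‖·‖_∞ denotes the operator norm. -/
open Matrix BigOperators

/-- `ℰ^{⊗m}`, the `m`-fold tensor power channel, acting on operators on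
`ℋ^⊗m`. -/
noncomputable def channelPow (m d : ℕ) {ι : Type*} [Fintype ι]
    (A : ι → Matrix (Fin d) (Fin d) ℂ)
    (Γ : Matrix (Fin m → Fin d) (Fin m → Fin d) ℂ) :
    Matrix (Fin m → Fin d) (Fin m → Fin d) ℂ :=
  ∑ k : Fin m → ι,
    tensorFamily m (fun i => A (k i)) * Γ * (tensorFamily m (fun i => A (k i)))ᴴ

set_option linter.unusedSectionVars false

/-! ### Auxiliary lemmas -/

section Chain
variable {κ : Type*} [Fintype κ] [DecidableEq κ]

lemma pow_chain (M : Matrix κ κ ℂ) : ∀ (q : ℕ) (a b : κ),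
    (M ^ (q+1)) a b =
      ∑ K : Fin q → κ,
        (∏ j : Fin q, M ((Fin.cons a K : Fin (q+1) → κ) j.castSucc)
            ((Fin.cons a K : Fin (q+1) → κ) j.succ)) *
          M ((Fin.cons a K : Fin (q+1) → κ) (Fin.last q)) b := by
  intro q
  induction q with
  | zero =>
    intro a b
    simp [Fin.last]
  | succ q ih =>
    intro a b
    rw [pow_succ, Matrix.mul_apply]
    simp_rw [ih, Finset.sum_mul]
    rw [← Fintype.sum_prod_type']
    apply Fintype.sum_equiv (Fin.snocEquiv (fun _ => κ))
    rintro ⟨c, K⟩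
    have hv : (Fin.cons a (Fin.snocEquiv (fun _ => κ) (c, K)) : Fin (q+2) → κ) =
        Fin.snoc (Fin.cons a K : Fin (q+1) → κ) c := by
      show (Fin.cons a (Fin.snoc K c) : Fin (q+2) → κ) = _
      rw [Fin.cons_snoc_eq_snoc_cons]
    rw [hv, Fin.prod_univ_castSucc]
    simp only [Fin.snoc_last, Fin.snoc_castSucc, Fin.succ_castSucc, Fin.succ_last]

lemma trace_pow_chain (M : Matrix κ κ ℂ) (q : ℕ) :
    (M ^ (q+1)).trace = ∑ K : Fin (q+1) → κ, ∏ j, M (K j) (K (j+1)) := by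
  rw [Matrix.trace]
  simp_rw [Matrix.diag_apply, pow_chain]
  rw [← Fintype.sum_prod_type']
  apply Fintype.sum_equiv (Fin.consEquiv (fun _ => κ))
  rintro ⟨a, K⟩
  show (∏ j : Fin q, M _ _) * M _ a
      = ∏ j : Fin (q+1), M ((Fin.cons a K : Fin (q+1) → κ) j)
          ((Fin.cons a K : Fin (q+1) → κ) (j+1))
  rw [Fin.prod_univ_castSucc]
  simp [Fin.coeSucc_eq_succ, Fin.last_add_one]
end Chain

section Rect
variable {n κ : Type*} [Fintype n] [Fintype κ] [DecidableEq n] [DecidableEq κ]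

lemma mul_pow_rect (F : Matrix n κ ℂ) (Gm : Matrix κ n ℂ) :
    ∀ q : ℕ, (F * Gm) ^ (q+1) = F * (Gm * F) ^ q * Gm := by
  intro q
  induction q with
  | zero => simp
  | succ q ih =>
    rw [pow_succ, ih, pow_succ]
    simp only [Matrix.mul_assoc]

lemma trace_mul_pow_comm (F : Matrix n κ ℂ) (Gm : Matrix κ n ℂ) (q : ℕ) :
    ((F * Gm) ^ (q+1)).trace = ((Gm * F) ^ (q+1)).trace := by
  rw [mul_pow_rect, Matrix.trace_mul_comm, pow_succ']
  rw [Matrix.mul_assoc]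
end Rect

section TF
variable {n : Type*} [Fintype n] [DecidableEq n]

lemma tensorFamily_mul {p : ℕ} (C D : Fin p → Matrix n n ℂ) :
    tensorFamily p C * tensorFamily p D = tensorFamily p (fun i => C i * D i) := by
  ext x y
  rw [Matrix.mul_apply]
  simp only [tensorFamily, Matrix.of_apply, Matrix.mul_apply]
  rw [Finset.prod_univ_sum (t := fun _ => Finset.univ)
    (f := fun i a => C i (x i) a * D i a (y i))]
  rw [Fintype.piFinset_univ]
  exact Finset.sum_congr rfl fun z _ => (Finset.prod_mul_distrib).symm

lemma tensorFamily_one {p : ℕ} :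
    tensorFamily p (fun _ : Fin p => (1 : Matrix n n ℂ)) = 1 := by
  ext x y
  simp only [tensorFamily, Matrix.of_apply, Matrix.one_apply]
  simp_rw [Finset.prod_boole]
  simp [funext_iff]
end TF

lemma tensorFamily_mul_leftShift {p d : ℕ} [NeZero p]
    (C : Fin p → Matrix (Fin d) (Fin d) ℂ) (a u : Fin p → Fin d) :
    (tensorFamily p C * leftShift p d) a u = ∏ j, C j (a j) (u (j + 1)) := by
  rw [Matrix.mul_apply]
  simp only [tensorFamily, leftShift, Matrix.of_apply]
  have : ∀ z : Fin p → Fin d, (∀ i, z i = u (i + 1)) ↔ z = fun i => u (i + 1) := by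
    intro z; rw [funext_iff]
  simp_rw [this]
  simp [Finset.sum_ite_eq' Finset.univ (fun i => u (i + 1))]

lemma omega_apply {p d : ℕ} [NeZero p] {ι : Type*} [Fintype ι]
    (A : ι → Matrix (Fin d) (Fin d) ℂ) (a b : Fin p → Fin d) :
    Omega p d A a b =
      ∑ kv : (Fin p → ι) × (Fin p → Fin d),
        ∏ j, ((starRingEnd ℂ) (A (kv.1 j) (kv.2 (j+1)) (a j)) *
          A (kv.1 j) (kv.2 j) (b j)) := by
  rw [Omega, Matrix.sum_apply]
  rw [Fintype.sum_prod_type]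
  apply Finset.sum_congr rfl
  intro k _
  rw [Matrix.mul_apply]
  apply Finset.sum_congr rfl
  intro u _
  rw [tensorFamily_mul_leftShift]
  simp only [tensorFamily, Matrix.of_apply, Matrix.conjTranspose_apply]
  rw [← Finset.prod_mul_distrib]
  rfl

section Analysis
variable {n : Type*} [Fintype n] [DecidableEq n]

lemma euclid_norm_symm (v : n → ℂ) :
    ‖(WithLp.equiv 2 (n → ℂ)).symm v‖ = Real.sqrt (∑ x, ‖v x‖ ^ 2) := by
  rw [EuclideanSpace.norm_eq]
  rfl

lemma Matrix.toEuclideanCLM_piLp_equiv_symm (A : Matrix n n ℂ) (x : n → ℂ) :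
    Matrix.toEuclideanCLM (𝕜 := ℂ) A ((WithLp.equiv 2 (n → ℂ)).symm x) =
      (WithLp.equiv 2 (n → ℂ)).symm (Matrix.toLin' A x) := rfl

lemma mulVec_norm_sq_le (C : Matrix n n ℂ) (u : n → ℂ) :
    ∑ a, ‖(C.mulVec u) a‖ ^ 2 ≤
      ‖Matrix.toEuclideanCLM (𝕜 := ℂ) C‖ ^ 2 * ∑ a, ‖u a‖ ^ 2 := by
  have h := (Matrix.toEuclideanCLM (𝕜 := ℂ) C).le_opNorm ((WithLp.equiv 2 (n → ℂ)).symm u)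
  rw [Matrix.toEuclideanCLM_piLp_equiv_symm, Matrix.toLin'_apply, euclid_norm_symm,
    euclid_norm_symm] at h
  have h2 : Real.sqrt (∑ a, ‖(C.mulVec u) a‖ ^ 2) ^ 2 ≤
      (‖Matrix.toEuclideanCLM (𝕜 := ℂ) C‖ * Real.sqrt (∑ a, ‖u a‖ ^ 2)) ^ 2 :=
    pow_le_pow_left₀ (Real.sqrt_nonneg _) h 2
  rw [Real.sq_sqrt (by positivity), mul_pow, Real.sq_sqrt (by positivity)] at h2
  exact h2

lemma quadform_re_le (M : Matrix n n ℂ) (v : n → ℂ) :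
    (∑ x, ∑ y, (starRingEnd ℂ) (v x) * M x y * v y).re ≤
      ‖Matrix.toEuclideanCLM (𝕜 := ℂ) M‖ * ∑ x, ‖v x‖ ^ 2 := by
  set v' : EuclideanSpace ℂ n := (WithLp.equiv 2 (n → ℂ)).symm v with hv'
  have h1 : (inner ℂ v' (Matrix.toEuclideanCLM (𝕜 := ℂ) M v') : ℂ)
      = ∑ x, ∑ y, (starRingEnd ℂ) (v x) * M x y * v y := by
    rw [hv', Matrix.toEuclideanCLM_piLp_equiv_symm, Matrix.toLin'_apply, PiLp.inner_apply]
    apply Finset.sum_congr rfl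
    intro x _
    rw [RCLike.inner_apply']
    show (starRingEnd ℂ) (v x) * (M.mulVec v) x = _
    rw [Matrix.mulVec, dotProduct, Finset.mul_sum]
    exact Finset.sum_congr rfl fun y _ => by ring
  calc (∑ x, ∑ y, (starRingEnd ℂ) (v x) * M x y * v y).re
      ≤ ‖(∑ x, ∑ y, (starRingEnd ℂ) (v x) * M x y * v y : ℂ)‖ := Complex.re_le_norm _
    _ = ‖(inner ℂ v' (Matrix.toEuclideanCLM (𝕜 := ℂ) M v') : ℂ)‖ := by rw [h1]
    _ ≤ ‖v'‖ * ‖Matrix.toEuclideanCLM (𝕜 := ℂ) M v'‖ := norm_inner_le_norm _ _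
    _ ≤ ‖v'‖ * (‖Matrix.toEuclideanCLM (𝕜 := ℂ) M‖ * ‖v'‖) :=
        mul_le_mul_of_nonneg_left ((Matrix.toEuclideanCLM (𝕜 := ℂ) M).le_opNorm v')
          (norm_nonneg _)
    _ = ‖Matrix.toEuclideanCLM (𝕜 := ℂ) M‖ * (‖v'‖ * ‖v'‖) := by ring
    _ = ‖Matrix.toEuclideanCLM (𝕜 := ℂ) M‖ * ∑ x, ‖v x‖ ^ 2 := by
        rw [hv', euclid_norm_symm, Real.mul_self_sqrt (by positivity)]
end Analysis

section Slot
variable {m : ℕ} {n : Type*} [Fintype n] [DecidableEq n]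

lemma slot_mulVec (C : Matrix n n ℂ) (i : Fin m) (v : (Fin m → n) → ℂ)
    (a : n) (g : {j : Fin m // j ≠ i} → n) :
    (tensorFamily m (fun j => if j = i then C else 1)).mulVec v
        ((Equiv.piSplitAt i (fun _ => n)).symm (a, g)) =
      C.mulVec (fun c => v ((Equiv.piSplitAt i (fun _ => n)).symm (c, g))) a := by
  set e := Equiv.piSplitAt i (fun _ : Fin m => n) with he
  have hfst : ∀ x : n × ({j : Fin m // j ≠ i} → n), e.symm x i = x.1 :=
    fun x => congrArg Prod.fst (e.apply_symm_apply x)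
  have hsnd : ∀ (x : n × ({j : Fin m // j ≠ i} → n)) (j : Fin m) (h : j ≠ i),
      e.symm x j = x.2 ⟨j, h⟩ :=
    fun x j h => congrFun (congrArg Prod.snd (e.apply_symm_apply x)) ⟨j, h⟩
  simp only [Matrix.mulVec, dotProduct]
  rw [← Equiv.sum_comp e.symm
    (fun y => tensorFamily m (fun j => if j = i then C else 1) (e.symm (a,g)) y * v y)]
  rw [Fintype.sum_prod_type]
  apply Finset.sum_congr rfl
  intro c _
  rw [Finset.sum_eq_single g]
  · congr 1
    rw [tensorFamily, Matrix.of_apply, ← Finset.mul_prod_erase Finset.univ _ (Finset.mem_univ i)]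
    rw [if_pos rfl, hfst, hfst]
    have h1 : ∀ j ∈ Finset.univ.erase i,
        (if j = i then C else 1) (e.symm (a,g) j) (e.symm (c,g) j) = 1 := by
      intro j hj
      have hji : j ≠ i := (Finset.mem_erase.mp hj).1
      rw [if_neg hji, hsnd _ _ hji, hsnd _ _ hji, Matrix.one_apply_eq]
    rw [Finset.prod_congr rfl h1, Finset.prod_const_one, mul_one]
  · intro h _ hg
    have : ∃ j0, h j0 ≠ g j0 := by
      by_contra hc
      push_neg at hc
      exact hg (funext hc)
    obtain ⟨j0, hj0⟩ := this
    rw [tensorFamily, Matrix.of_apply]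
    rw [Finset.prod_eq_zero (Finset.mem_univ (j0 : Fin m))]
    · rw [zero_mul]
    · rw [if_neg j0.2, hsnd _ _ j0.2, hsnd _ _ j0.2]
      exact Matrix.one_apply_ne (Ne.symm hj0)
  · intro hg; exact absurd (Finset.mem_univ g) hg

lemma slot_norm_le (C : Matrix n n ℂ) (i : Fin m) :
    ‖Matrix.toEuclideanCLM (𝕜 := ℂ) (tensorFamily m (fun j => if j = i then C else 1))‖ ≤
      ‖Matrix.toEuclideanCLM (𝕜 := ℂ) C‖ := by
  apply ContinuousLinearMap.opNorm_le_bound _ (norm_nonneg _)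
  intro x
  set e := Equiv.piSplitAt i (fun _ : Fin m => n) with he
  set v : (Fin m → n) → ℂ := WithLp.equiv 2 _ x with hv
  have hx : x = (WithLp.equiv 2 ((Fin m → n) → ℂ)).symm v := rfl
  set S := tensorFamily m (fun j => if j = i then C else 1) with hS
  rw [hx, Matrix.toEuclideanCLM_piLp_equiv_symm, Matrix.toLin'_apply, euclid_norm_symm,
    euclid_norm_symm]
  have key : ∑ z, ‖(S.mulVec v) z‖ ^ 2 ≤
      ‖Matrix.toEuclideanCLM (𝕜 := ℂ) C‖ ^ 2 * ∑ z, ‖v z‖ ^ 2 := by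
    calc ∑ z, ‖(S.mulVec v) z‖ ^ 2
        = ∑ g : {j : Fin m // j ≠ i} → n, ∑ a : n, ‖(S.mulVec v) (e.symm (a, g))‖ ^ 2 := by
          rw [← Equiv.sum_comp e.symm (fun z => ‖(S.mulVec v) z‖ ^ 2),
            Fintype.sum_prod_type, Finset.sum_comm]
      _ ≤ ∑ g : {j : Fin m // j ≠ i} → n,
            ‖Matrix.toEuclideanCLM (𝕜 := ℂ) C‖ ^ 2 * ∑ a : n, ‖v (e.symm (a, g))‖ ^ 2 := by
          apply Finset.sum_le_sum
          intro g _
          have h2 := mulVec_norm_sq_le C (fun c => v (e.symm (c, g)))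
          simp_rw [hS, he, fun a => slot_mulVec C i v a g]
          exact h2
      _ = ‖Matrix.toEuclideanCLM (𝕜 := ℂ) C‖ ^ 2 * ∑ z, ‖v z‖ ^ 2 := by
          rw [← Finset.mul_sum]
          congr 1
          rw [← Equiv.sum_comp e.symm (fun z => ‖v z‖ ^ 2),
            Fintype.sum_prod_type, Finset.sum_comm]
  calc Real.sqrt (∑ z, ‖(S.mulVec v) z‖ ^ 2)
      ≤ Real.sqrt (‖Matrix.toEuclideanCLM (𝕜 := ℂ) C‖ ^ 2 * ∑ z, ‖v z‖ ^ 2) :=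
        Real.sqrt_le_sqrt key
    _ = ‖Matrix.toEuclideanCLM (𝕜 := ℂ) C‖ * Real.sqrt (∑ z, ‖v z‖ ^ 2) := by
        rw [Real.sqrt_mul (sq_nonneg _), Real.sqrt_sq (norm_nonneg _)]

set_option synthInstance.maxHeartbeats 1000000 in
set_option maxHeartbeats 1000000 in
lemma tensor_norm_le (B : Fin m → Matrix n n ℂ) :
    ‖Matrix.toEuclideanCLM (𝕜 := ℂ) (tensorFamily m B)‖ ≤
      ∏ i, ‖Matrix.toEuclideanCLM (𝕜 := ℂ) (B i)‖ := by
  have main : ∀ s : Finset (Fin m),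
      ‖Matrix.toEuclideanCLM (𝕜 := ℂ) (tensorFamily m (fun j => if j ∈ s then B j else 1))‖ ≤
        ∏ i ∈ s, ‖Matrix.toEuclideanCLM (𝕜 := ℂ) (B i)‖ := by
    intro s
    induction s using Finset.induction_on with
    | empty =>
      simp only [Finset.notMem_empty, if_false, Finset.prod_empty]
      rw [tensorFamily_one, _root_.map_one, ContinuousLinearMap.one_def]
      exact ContinuousLinearMap.norm_id_le
    | @insert i s hi ih =>
      have hsplit : (fun j => if j ∈ insert i s then B j else 1) =
          (fun j => (if j = i then B i else 1) * (if j ∈ s then B j else 1)) := by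
        funext j
        by_cases h1 : j = i
        · subst h1
          simp [hi]
        · by_cases h2 : j ∈ s <;> simp [h1, h2, Finset.mem_insert]
      rw [hsplit, ← tensorFamily_mul, _root_.map_mul, Finset.prod_insert hi]
      calc ‖Matrix.toEuclideanCLM (𝕜 := ℂ) (tensorFamily m (fun j => if j = i then B i else 1)) *
            Matrix.toEuclideanCLM (𝕜 := ℂ) (tensorFamily m (fun j => if j ∈ s then B j else 1))‖
          ≤ ‖Matrix.toEuclideanCLM (𝕜 := ℂ) (tensorFamily m (fun j => if j = i then B i else 1))‖ *
            ‖Matrix.toEuclideanCLM (𝕜 := ℂ) (tensorFamily m (fun j => if j ∈ s then B j else 1))‖ :=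
            norm_mul_le _ _
        _ ≤ ‖Matrix.toEuclideanCLM (𝕜 := ℂ) (B i)‖ *
            ∏ i ∈ s, ‖Matrix.toEuclideanCLM (𝕜 := ℂ) (B i)‖ :=
            mul_le_mul (slot_norm_le _ _) ih (norm_nonneg _) (norm_nonneg _)
  have := main Finset.univ
  simpa using this
end Slot

section Gram
variable {n κ : Type*} [Fintype n] [Fintype κ] [DecidableEq n] [DecidableEq κ]

lemma kraus_pure (T W : Matrix n n ℂ) (u v : n → ℂ) :
    T * Matrix.vecMulVec u (star v) * Wᴴ =
      Matrix.vecMulVec (T.mulVec u) (star (W.mulVec v)) := by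
  ext x y
  simp only [Matrix.mul_apply, Matrix.vecMulVec_apply, Matrix.conjTranspose_apply,
    Pi.star_apply, Matrix.mulVec, dotProduct, star_sum, star_mul']
  rw [Finset.sum_mul_sum]
  rw [Finset.sum_comm]
  apply Finset.sum_congr rfl; intro b _
  rw [Finset.sum_mul]
  apply Finset.sum_congr rfl; intro a _
  ring

lemma kraus_sum_eq (T : κ → Matrix n n ℂ) (ψ : n → ℂ) :
    (∑ K, T K * Matrix.vecMulVec ψ (star ψ) * (T K)ᴴ) =
      (Matrix.of fun x K => ((T K).mulVec ψ) x) *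
        (Matrix.of fun x K => ((T K).mulVec ψ) x)ᴴ := by
  ext x y
  rw [Matrix.sum_apply, Matrix.mul_apply]
  apply Finset.sum_congr rfl
  intro K _
  rw [kraus_pure, Matrix.vecMulVec_apply]
  simp [Matrix.conjTranspose_apply]

lemma gram_apply (T : κ → Matrix n n ℂ) (ψ : n → ℂ) (K L : κ) :
    ((Matrix.of fun x K => ((T K).mulVec ψ) x)ᴴ *
      (Matrix.of fun x K => ((T K).mulVec ψ) x)) K L =
      ∑ x, (starRingEnd ℂ) (((T K).mulVec ψ) x) * ((T L).mulVec ψ) x := by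
  rw [Matrix.mul_apply]
  simp [Matrix.conjTranspose_apply]
end Gram

def monsterEquiv (p m d : ℕ) [NeZero p] (ι : Type*) :
    ((Fin p → (Fin m → ι)) ×
      (Fin p → ((Fin m → Fin d) × (Fin m → Fin d) × (Fin m → Fin d)))) ≃
    ((Fin m → Fin p → Fin d) × (Fin m → Fin p → Fin d) ×
      (Fin m → (Fin p → ι) × (Fin p → Fin d))) where
  toFun KP :=
    (fun i j => (KP.2 j).2.1 i,
     fun i j => (KP.2 (j-1)).2.2 i,
     fun i => (fun j => KP.1 j i, fun j => (KP.2 (j-1)).1 i))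
  invFun xyQ :=
    (fun j i => (xyQ.2.2 i).1 j,
     fun j => (fun i => (xyQ.2.2 i).2 (j+1), fun i => xyQ.1 i j,
               fun i => xyQ.2.1 i (j+1)))
  left_inv := by
    rintro ⟨K, P⟩
    refine Prod.ext rfl (funext fun j => ?_)
    show ((fun i => (P (j+1-1)).1 i, fun i => (P j).2.1 i,
           fun i => (P (j+1-1)).2.2 i) :
       (Fin m → Fin d) × (Fin m → Fin d) × (Fin m → Fin d)) = P j
    rw [add_sub_cancel_right]
  right_inv := by
    rintro ⟨x, y, Q⟩
    refine Prod.ext (funext fun i => funext fun j => rfl) (Prod.ext ?_ ?_)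
    · funext i j
      show y i (j - 1 + 1) = y i j
      rw [sub_add_cancel]
    · funext i
      show ((fun j => (Q i).1 j, fun j => (Q i).2 (j - 1 + 1)) :
          (Fin p → ι) × (Fin p → Fin d)) = Q i
      simp_rw [sub_add_cancel]

lemma monster (p m d : ℕ) [NeZero p] {ι : Type*} [Fintype ι]
    (A : ι → Matrix (Fin d) (Fin d) ℂ) (Ψ : (Fin m → Fin d) → ℂ) :
    (∑ K : Fin p → (Fin m → ι),
      ∑ P : Fin p → ((Fin m → Fin d) × (Fin m → Fin d) × (Fin m → Fin d)),
      ∏ j, ((starRingEnd ℂ) (Ψ ((P j).2.1)) * Ψ ((P j).2.2) *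
        (∏ i, (starRingEnd ℂ) (A (K j i) ((P j).1 i) ((P j).2.1 i))) *
        (∏ i, A (K (j+1) i) ((P j).1 i) ((P j).2.2 i))))
    = ∑ x : Fin m → Fin p → Fin d, ∑ y : Fin m → Fin p → Fin d,
        ∑ Q : Fin m → (Fin p → ι) × (Fin p → Fin d),
        (∏ j, (starRingEnd ℂ) (Ψ (fun i => x i j))) *
        (∏ i, ∏ j, ((starRingEnd ℂ) (A ((Q i).1 j) ((Q i).2 (j+1)) (x i j)) *
            A ((Q i).1 j) ((Q i).2 j) (y i j))) *
        (∏ j, Ψ (fun i => y i j)) := by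
  simp_rw [← Fintype.sum_prod_type']
  refine Fintype.sum_equiv (monsterEquiv p m d ι) _ _ (fun KP => ?_)
  rcases KP with ⟨K, P⟩
  show (∏ j, ((starRingEnd ℂ) (Ψ ((P j).2.1)) * Ψ ((P j).2.2) *
        (∏ i, (starRingEnd ℂ) (A (K j i) ((P j).1 i) ((P j).2.1 i))) *
        (∏ i, A (K (j+1) i) ((P j).1 i) ((P j).2.2 i))))
    = (∏ j, (starRingEnd ℂ) (Ψ (fun i => (P j).2.1 i))) *
      (∏ i, ∏ j, ((starRingEnd ℂ) (A (K j i) ((P (j+1-1)).1 i) ((P j).2.1 i)) *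
          A (K j i) ((P (j-1)).1 i) ((P (j-1)).2.2 i))) *
      (∏ j, Ψ (fun i => (P (j-1)).2.2 i))
  simp_rw [add_sub_cancel_right]
  simp only [Finset.prod_mul_distrib]
  rw [Finset.prod_comm (f := fun i j =>
    (starRingEnd ℂ) (A (K j i) ((P j).1 i) ((P j).2.1 i))),
    Finset.prod_comm (f := fun i j => A (K j i) ((P (j-1)).1 i) ((P (j-1)).2.2 i))]
  rw [← Equiv.prod_comp (Equiv.subRight (1 : Fin p))
    (fun j => ∏ i, A (K (j+1) i) ((P j).1 i) ((P j).2.2 i))]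
  rw [← Equiv.prod_comp (Equiv.subRight (1 : Fin p))
    (fun j => Ψ ((P j).2.2))]
  simp_rw [Equiv.subRight_apply, sub_add_cancel]
  ring

set_option maxHeartbeats 2000000 in
/-- For a CPT map `ℰ` and any unit vector `Ψ ∈ ℋ^⊗m`,
`Tr[(ℰ^{⊗m}(|Ψ⟩⟨Ψ|))^p] ≤ ‖Ω(ℰ,p)‖_∞^m`. -/
theorem trace_channelPow_pure_le_opNorm_Omega (p m d : ℕ) [NeZero p] [NeZero m]
    {ι : Type*} [Fintype ι] (A : ι → Matrix (Fin d) (Fin d) ℂ)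
    (hTP : ∑ k, (A k)ᴴ * A k = 1)
    (Ψ : (Fin m → Fin d) → ℂ) (hΨ : ∑ x, ‖Ψ x‖ ^ 2 = 1) :
    ((channelPow m d A (Matrix.vecMulVec Ψ (star Ψ))) ^ p).trace.re ≤
      ‖Matrix.toEuclideanCLM (𝕜 := ℂ) (Omega p d A)‖ ^ m := by
  classical
  obtain ⟨q, rfl⟩ : ∃ q, p = q + 1 :=
    ⟨p - 1, (Nat.succ_pred_eq_of_pos (Nat.pos_of_ne_zero (NeZero.ne p))).symm⟩
  set T : (Fin m → ι) → Matrix (Fin m → Fin d) (Fin m → Fin d) ℂ :=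
    fun K => tensorFamily m (fun i => A (K i)) with hT
  set F : Matrix (Fin m → Fin d) (Fin m → ι) ℂ :=
    Matrix.of fun x K => ((T K).mulVec Ψ) x with hF
  set w : (Fin m → Fin (q+1) → Fin d) → ℂ :=
    fun x => ∏ j, Ψ (fun i => x i j) with hw
  have hchan : channelPow m d A (Matrix.vecMulVec Ψ (star Ψ)) = F * Fᴴ := by
    rw [channelPow, hF]
    exact kraus_sum_eq T Ψ
  have hphi : ∀ (K : Fin m → ι) (γ : Fin m → Fin d),
      ((T K).mulVec Ψ) γ = ∑ a, (∏ i, A (K i) (γ i) (a i)) * Ψ a := by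
    intro K γ
    simp [Matrix.mulVec, dotProduct, hT, tensorFamily]
  have hGram : ∀ K L : Fin m → ι, (Fᴴ * F) K L =
      ∑ t : (Fin m → Fin d) × (Fin m → Fin d) × (Fin m → Fin d),
        ((starRingEnd ℂ) (Ψ (t.2.1)) * Ψ (t.2.2) *
        (∏ i, (starRingEnd ℂ) (A (K i) (t.1 i) (t.2.1 i))) *
        (∏ i, A (L i) (t.1 i) (t.2.2 i))) := by
    intro K L
    rw [hF, _root_.gram_apply]
    simp_rw [hphi, map_sum, _root_.map_mul, map_prod, Finset.sum_mul_sum]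
    rw [Fintype.sum_prod_type]
    apply Finset.sum_congr rfl; intro γ _
    rw [Fintype.sum_prod_type]
    apply Finset.sum_congr rfl; intro a _
    apply Finset.sum_congr rfl; intro b _
    ring
  have hchain : ((channelPow m d A (Matrix.vecMulVec Ψ (star Ψ))) ^ (q+1)).trace
      = ∑ K : Fin (q+1) → (Fin m → ι),
        ∑ P : Fin (q+1) → ((Fin m → Fin d) × (Fin m → Fin d) × (Fin m → Fin d)),
        ∏ j, ((starRingEnd ℂ) (Ψ ((P j).2.1)) * Ψ ((P j).2.2) *
          (∏ i, (starRingEnd ℂ) (A (K j i) ((P j).1 i) ((P j).2.1 i))) *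
          (∏ i, A (K (j+1) i) ((P j).1 i) ((P j).2.2 i))) := by
    rw [hchan, trace_mul_pow_comm, trace_pow_chain]
    apply Finset.sum_congr rfl; intro K _
    simp_rw [hGram]
    rw [Finset.prod_univ_sum (t := fun _ => Finset.univ)
      (f := fun (j : Fin (q+1))
          (t : (Fin m → Fin d) × (Fin m → Fin d) × (Fin m → Fin d)) =>
          ((starRingEnd ℂ) (Ψ (t.2.1)) * Ψ (t.2.2) *
          (∏ i, (starRingEnd ℂ) (A (K j i) (t.1 i) (t.2.1 i))) *
          (∏ i, A (K (j+1) i) (t.1 i) (t.2.2 i))))]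
    rw [Fintype.piFinset_univ]
  have hquad : (∑ x, ∑ y, (starRingEnd ℂ) (w x) *
      (tensorFamily m (fun _ => Omega (q+1) d A)) x y * w y)
      = ∑ x : Fin m → Fin (q+1) → Fin d, ∑ y : Fin m → Fin (q+1) → Fin d,
        ∑ Q : Fin m → (Fin (q+1) → ι) × (Fin (q+1) → Fin d),
        (∏ j, (starRingEnd ℂ) (Ψ (fun i => x i j))) *
        (∏ i, ∏ j, ((starRingEnd ℂ) (A ((Q i).1 j) ((Q i).2 (j+1)) (x i j)) *
            A ((Q i).1 j) ((Q i).2 j) (y i j))) *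
        (∏ j, Ψ (fun i => y i j)) := by
    apply Finset.sum_congr rfl; intro x _
    apply Finset.sum_congr rfl; intro y _
    simp only [hw, tensorFamily, Matrix.of_apply]
    simp_rw [omega_apply]
    rw [Finset.prod_univ_sum (t := fun _ => Finset.univ)
      (f := fun (i : Fin m) (kv : (Fin (q+1) → ι) × (Fin (q+1) → Fin d)) =>
          ∏ j, ((starRingEnd ℂ) (A (kv.1 j) (kv.2 (j+1)) (x i j)) *
            A (kv.1 j) (kv.2 j) (y i j))),
      Fintype.piFinset_univ]
    rw [map_prod]
    rw [Finset.mul_sum, Finset.sum_mul]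
  have hwnorm : ∑ x : Fin m → Fin (q+1) → Fin d, ‖w x‖ ^ 2 = 1 := by
    have h1 : ∀ x : Fin m → Fin (q+1) → Fin d,
        ‖w x‖ ^ 2 = ∏ j, ‖Ψ (fun i => x i j)‖ ^ 2 := by
      intro x
      simp only [hw]
      rw [norm_prod, ← Finset.prod_pow]
    calc ∑ x, ‖w x‖ ^ 2
        = ∑ x' : Fin (q+1) → Fin m → Fin d, ∏ j, ‖Ψ (x' j)‖ ^ 2 := by
          rw [← Equiv.sum_comp (Equiv.piComm fun (_ : Fin (q+1)) (_ : Fin m) => Fin d)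
            (fun x => ‖w x‖ ^ 2)]
          apply Finset.sum_congr rfl; intro x' _
          rw [h1]
          rfl
      _ = ∏ j : Fin (q+1), ∑ z : Fin m → Fin d, ‖Ψ z‖ ^ 2 := by
          rw [Finset.prod_univ_sum (t := fun _ => Finset.univ)
            (f := fun (_ : Fin (q+1)) (z : Fin m → Fin d) => ‖Ψ z‖ ^ 2),
            Fintype.piFinset_univ]
      _ = 1 := by rw [hΨ]; simp
  have hfinal := quadform_re_le (tensorFamily m (fun _ => Omega (q+1) d A)) w
  rw [hwnorm, mul_one] at hfinal
  calc ((channelPow m d A (Matrix.vecMulVec Ψ (star Ψ))) ^ (q+1)).trace.re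
      = (∑ x, ∑ y, (starRingEnd ℂ) (w x) *
          (tensorFamily m (fun _ => Omega (q+1) d A)) x y * w y).re := by
        rw [hchain, monster, ← hquad]
    _ ≤ ‖Matrix.toEuclideanCLM (𝕜 := ℂ) (tensorFamily m (fun _ => Omega (q+1) d A))‖ :=
        hfinal
    _ ≤ ∏ _i : Fin m, ‖Matrix.toEuclideanCLM (𝕜 := ℂ) (Omega (q+1) d A)‖ :=
        tensor_norm_le _
    _ = ‖Matrix.toEuclideanCLM (𝕜 := ℂ) (Omega (q+1) d A)‖ ^ m := by
        rw [Finset.prod_const, Finset.card_univ, Fintype.card_fin]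
end

section
/- For a unital qubit channel Φ with diagonal representation (λ₁,λ₂,λ₃) (i.e., Φ(½(1 + w⃗·σ⃗)) = ½(1 + Σ_j λ_j w_j σ_j)), the operator Ω(Φ,2) = Φ̂⊗Φ̂(S) = ½[𝟙⊗𝟙 + Σ_{j=1}^3 λ_j² σ_j⊗σ_j], and its eigenvalues are ½[1+λ₃² ± (λ₁²−λ₂²)] with Bell-state eigenvectors (|00⟩±|11⟩)/√2 and ½[1−λ₃² ± (λ₁²+λ₂²)] with Bell-state eigenvectors (|01⟩±|10⟩)/√2. -/
/-!
The SWAP operator has the Pauli expansion `S = ½(𝟙⊗𝟙 + Σⱼ σⱼ⊗σⱼ)`, and `supTensor F` is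
linear and, for linear `F`, sends `A ⊗ B` to `F A ⊗ F B`. Hence
`(Φ̂⊗Φ̂)(S) = ½(Φ̂𝟙⊗Φ̂𝟙 + Σⱼ Φ̂σⱼ⊗Φ̂σⱼ) = ½(𝟙⊗𝟙 + Σⱼ λⱼ² σⱼ⊗σⱼ)`.
The four Bell vectors are joint eigenvectors of the commuting operators `σⱼ⊗σⱼ`,
with eigenvalues `±1`, which gives the spectrum.
-/

open Matrix Kronecker BigOperators

/-- The Pauli matrices `σ₁, σ₂, σ₃`. -/
noncomputable def pauli : Fin 3 → Matrix (Fin 2) (Fin 2) ℂ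
  | 0 => !![0, 1; 1, 0]
  | 1 => !![0, -Complex.I; Complex.I, 0]
  | 2 => !![1, 0; 0, -1]

/-- The tensor product `F ⊗ F` of a superoperator `F` with itself, applied to
an operator `M` on `ℋ ⊗ ℋ`, via the expansion of `M` in matrix units. -/
noncomputable def supTensor {n : Type*} [Fintype n] [DecidableEq n]
    (F : Matrix n n ℂ → Matrix n n ℂ) (M : Matrix (n × n) (n × n) ℂ) :
    Matrix (n × n) (n × n) ℂ :=
  ∑ a, ∑ b, ∑ c, ∑ e, M (a, c) (b, e) •
    (F (Matrix.single a b 1) ⊗ₖ F (Matrix.single c e 1))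

/-- The SWAP operator `S(u⊗v) = v⊗u` on `ℂ^d ⊗ ℂ^d`. -/
noncomputable def swapMat (n : Type*) [DecidableEq n] :
    Matrix (n × n) (n × n) ℂ :=
  Matrix.of fun x y => if x.1 = y.2 ∧ x.2 = y.1 then 1 else 0

section supTensor

variable {n : Type*} [Fintype n] [DecidableEq n]

@[simps]
noncomputable def supTensorLinearMap (F : Matrix n n ℂ → Matrix n n ℂ) :
    Matrix (n × n) (n × n) ℂ →ₗ[ℂ] Matrix (n × n) (n × n) ℂ where
  toFun := supTensor F
  map_add' M N := by
    simp only [supTensor, Matrix.add_apply, add_smul, Finset.sum_add_distrib]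
  map_smul' z M := by
    simp only [supTensor, Matrix.smul_apply, smul_eq_mul, mul_smul, Finset.smul_sum,
      RingHom.id_apply]

lemma supTensor_kronecker (F : Matrix n n ℂ →ₗ[ℂ] Matrix n n ℂ) (A B : Matrix n n ℂ) :
    supTensor F (A ⊗ₖ B) = F A ⊗ₖ F B := by
  have hF : ∀ M : Matrix n n ℂ, F M = ∑ a, ∑ b, M a b • F (single a b 1) := fun M => by
    conv_lhs => rw [matrix_eq_sum_single M]
    simp only [map_sum, ← _root_.map_smul, smul_single, smul_eq_mul, mul_one]
  ext ⟨i, k⟩ ⟨j, l⟩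
  rw [hF A, hF B]
  simp only [supTensor, Matrix.sum_apply, Matrix.smul_apply, kronecker_apply, smul_eq_mul]
  simp_rw [Finset.sum_mul, Finset.mul_sum]
  refine Finset.sum_congr rfl fun a _ => Finset.sum_congr rfl fun b _ =>
    Finset.sum_congr rfl fun c _ => Finset.sum_congr rfl fun e _ => by ring

end supTensor

lemma swapMat_eq_pauli :
    swapMat (Fin 2) = (1 / 2 : ℂ) • (1 ⊗ₖ 1 + ∑ j, pauli j ⊗ₖ pauli j) := by
  ext ⟨i, k⟩ ⟨j, l⟩
  fin_cases i <;> fin_cases k <;> fin_cases j <;> fin_cases l <;>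
    simp [swapMat, pauli, Fin.sum_univ_three] <;> ring_nf

lemma supTensor_swapMat_of_pauli_diagonal (c : Fin 3 → ℂ)
    (Φ : Matrix (Fin 2) (Fin 2) ℂ →ₗ[ℂ] Matrix (Fin 2) (Fin 2) ℂ) (hunit : Φ 1 = 1)
    (hdiag : ∀ j, Φ (pauli j) = c j • pauli j) :
    supTensor Φ (swapMat (Fin 2)) =
      (1 / 2 : ℂ) • (1 + ∑ j, c j ^ 2 • (pauli j ⊗ₖ pauli j)) := by
  rw [swapMat_eq_pauli]
  change supTensorLinearMap Φ _ = _
  rw [map_smul, map_add, map_sum]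
  simp only [supTensorLinearMap_apply, supTensor_kronecker]
  simp only [hunit, hdiag, one_kronecker_one, smul_kronecker, kronecker_smul, smul_smul, sq]

lemma Matrix.smul_one_add_sum_smul_mulVec {R ι m : Type*} [CommRing R] [Fintype ι] [Fintype m]
    [DecidableEq m] (z : R) (c s : ι → R) (P : ι → Matrix m m R) (v : m → R)
    (hv : ∀ j, P j *ᵥ v = s j • v) :
    (z • (1 + ∑ j, c j • P j)) *ᵥ v = (z * (1 + ∑ j, c j * s j)) • v := by
  simp only [smul_mulVec, add_mulVec, one_mulVec, sum_mulVec, hv, smul_smul, ← Finset.sum_smul]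
  module

-- The four vectors of `Omega_unital_qubit` are `bellVec` unfolded, with `s = ±1`.
noncomputable def bellVec (p q : Fin 2 × Fin 2) (s : ℂ) : Fin 2 × Fin 2 → ℂ :=
  fun x => (if x = p then 1 else if x = q then s else 0) / (Real.sqrt 2 : ℂ)

lemma pauli_kronecker_pauli_mulVec_bellVec_diag {s : ℂ} (hs : s ^ 2 = 1) (j : Fin 3) :
    (pauli j ⊗ₖ pauli j) *ᵥ bellVec (0, 0) (1, 1) s =
      ![s, -s, 1] j • bellVec (0, 0) (1, 1) s := by
  fin_cases j <;> ext ⟨x, y⟩ <;> fin_cases x <;> fin_cases y <;>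
    simp [bellVec, pauli, mulVec, dotProduct, Fintype.sum_prod_type, div_eq_mul_inv,
      ← mul_assoc, ← sq, hs]

lemma pauli_kronecker_pauli_mulVec_bellVec_offDiag {s : ℂ} (hs : s ^ 2 = 1) (j : Fin 3) :
    (pauli j ⊗ₖ pauli j) *ᵥ bellVec (0, 1) (1, 0) s =
      ![s, s, -1] j • bellVec (0, 1) (1, 0) s := by
  fin_cases j <;> ext ⟨x, y⟩ <;> fin_cases x <;> fin_cases y <;>
    simp [bellVec, pauli, mulVec, dotProduct, Fintype.sum_prod_type, div_eq_mul_inv,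
      ← mul_assoc, ← sq, hs]

/-- For a unital qubit channel `Φ` with diagonal representation
`(λ₁,λ₂,λ₃)`, `Ω(Φ,2) = (Φ̂⊗Φ̂)(S) = ½[𝟙⊗𝟙 + Σ_j λ_j² σ_j⊗σ_j]`,
with Bell state eigenvectors `(|00⟩±|11⟩)/√2` (eigenvalues
`½[1+λ₃² ± (λ₁²−λ₂²)]`) and `(|01⟩±|10⟩)/√2` (eigenvalues
`½[1−λ₃² ± (λ₁²+λ₂²)]`). -/
theorem Omega_unital_qubit (lam : Fin 3 → ℝ)
    (Φhat : Matrix (Fin 2) (Fin 2) ℂ →ₗ[ℂ] Matrix (Fin 2) (Fin 2) ℂ)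
    (hunit : Φhat 1 = 1)
    (hdiag : ∀ j, Φhat (pauli j) = (lam j : ℂ) • pauli j) :
    supTensor (fun M => Φhat M) (swapMat (Fin 2)) =
        (1 / 2 : ℂ) • ((1 : Matrix (Fin 2 × Fin 2) (Fin 2 × Fin 2) ℂ) +
          ∑ j, ((lam j : ℂ) ^ 2) • (pauli j ⊗ₖ pauli j)) ∧
      (supTensor (fun M => Φhat M) (swapMat (Fin 2))).mulVec
          (fun x => (if x = (0, 0) then 1 else if x = (1, 1) then 1 else 0) /
            (Real.sqrt 2 : ℂ)) =
        (((1 + lam 2 ^ 2 + (lam 0 ^ 2 - lam 1 ^ 2)) / 2 : ℝ) : ℂ) •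
          (fun x => (if x = (0, 0) then 1 else if x = (1, 1) then 1 else 0) /
            (Real.sqrt 2 : ℂ)) ∧
      (supTensor (fun M => Φhat M) (swapMat (Fin 2))).mulVec
          (fun x => (if x = (0, 0) then 1 else if x = (1, 1) then -1 else 0) /
            (Real.sqrt 2 : ℂ)) =
        (((1 + lam 2 ^ 2 - (lam 0 ^ 2 - lam 1 ^ 2)) / 2 : ℝ) : ℂ) •
          (fun x => (if x = (0, 0) then 1 else if x = (1, 1) then -1 else 0) /
            (Real.sqrt 2 : ℂ)) ∧
      (supTensor (fun M => Φhat M) (swapMat (Fin 2))).mulVec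
          (fun x => (if x = (0, 1) then 1 else if x = (1, 0) then 1 else 0) /
            (Real.sqrt 2 : ℂ)) =
        (((1 - lam 2 ^ 2 + (lam 0 ^ 2 + lam 1 ^ 2)) / 2 : ℝ) : ℂ) •
          (fun x => (if x = (0, 1) then 1 else if x = (1, 0) then 1 else 0) /
            (Real.sqrt 2 : ℂ)) ∧
      (supTensor (fun M => Φhat M) (swapMat (Fin 2))).mulVec
          (fun x => (if x = (0, 1) then 1 else if x = (1, 0) then -1 else 0) /
            (Real.sqrt 2 : ℂ)) =
        (((1 - lam 2 ^ 2 - (lam 0 ^ 2 + lam 1 ^ 2)) / 2 : ℝ) : ℂ) •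
          (fun x => (if x = (0, 1) then 1 else if x = (1, 0) then -1 else 0) /
            (Real.sqrt 2 : ℂ)) := by
  have hΩ := supTensor_swapMat_of_pauli_diagonal (fun j => (lam j : ℂ)) Φhat hunit hdiag
  have hΦ := fun s (hs : s ^ 2 = 1) => smul_one_add_sum_smul_mulVec (1 / 2 : ℂ)
    (fun j => (lam j : ℂ) ^ 2) _ _ _ (pauli_kronecker_pauli_mulVec_bellVec_diag hs)
  have hΨ := fun s (hs : s ^ 2 = 1) => smul_one_add_sum_smul_mulVec (1 / 2 : ℂ)
    (fun j => (lam j : ℂ) ^ 2) _ _ _ (pauli_kronecker_pauli_mulVec_bellVec_offDiag hs)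
  refine ⟨hΩ, ?_, ?_, ?_, ?_⟩ <;> rw [hΩ]
  · exact (hΦ 1 (one_pow 2)).trans (by congr 1; push_cast; simp [Fin.sum_univ_three]; ring)
  · exact (hΦ (-1) (by norm_num)).trans (by congr 1; push_cast; simp [Fin.sum_univ_three]; ring)
  · exact (hΨ 1 (one_pow 2)).trans (by congr 1; push_cast; simp [Fin.sum_univ_three]; ring)
  · exact (hΨ (-1) (by norm_num)).trans (by congr 1; push_cast; simp [Fin.sum_univ_three]; ring)
end

section
/- Let ρ have eigenvalues a₁ ≥ a₂ ≥ ⋯ ≥ a_d with eigenvectors |j⟩. The operator Ω = (1−c)²(Tr ρ²)𝟙⊗𝟙 + c(1−c)(𝟙⊗ρ + ρ⊗𝟙) + c²S has eigenvectors |kk⟩ with eigenvalues [(1−c)a_k + c]² + (1−c)²Σ_{j≠k} a_j², and eigenvectors (|jk⟩ ± |kj⟩)/√2 (j < k) with eigenvalues (1−c)²(Tr ρ²) + c(1−c)(a_j + a_k) ± c². -/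
open Matrix Kronecker BigOperators

/-- Multiplying a matrix by a standard basis vector extracts a column. -/
lemma mulVec_e {n : Type*} [Fintype n] [DecidableEq n]
    (M : Matrix n n ℂ) (p : n) :
    M.mulVec (fun x => if x = p then (1:ℂ) else 0) = fun x => M x p := by
  funext x
  simp [Matrix.mulVec, dotProduct, mul_ite, Finset.sum_ite_eq']

/-- Let `ρ = Σ_j a_j |j⟩⟨j|` be a density matrix with decreasing eigenvalues.
The operator `Ω = (1−c)²(Tr ρ²)𝟙⊗𝟙 + c(1−c)(𝟙⊗ρ + ρ⊗𝟙) + c²S` has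
eigenvectors `|kk⟩` with eigenvalues `[(1−c)a_k + c]² + (1−c)²Σ_{j≠k}a_j²`
and eigenvectors `(|jk⟩ ± |kj⟩)/√2` (`j < k`) with eigenvalues
`(1−c)²(Tr ρ²) + c(1−c)(a_j + a_k) ± c²`. -/
theorem Omega_shifted_depolarizing_eigen (d : ℕ) (c : ℝ) (a : Fin d → ℝ)
    (hmono : Antitone a) (hnn : ∀ j, 0 ≤ a j) (hsum : ∑ j, a j = 1) :
    (∀ k : Fin d,
      (((1 - (c : ℂ)) ^ 2 * (∑ j, (a j : ℂ) ^ 2)) •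
            (1 : Matrix (Fin d × Fin d) (Fin d × Fin d) ℂ) +
          ((c : ℂ) * (1 - (c : ℂ))) •
            ((1 : Matrix (Fin d) (Fin d) ℂ) ⊗ₖ
                Matrix.diagonal (fun j => (a j : ℂ)) +
              Matrix.diagonal (fun j => (a j : ℂ)) ⊗ₖ
                (1 : Matrix (Fin d) (Fin d) ℂ)) +
          ((c : ℂ) ^ 2) • swapMat (Fin d)).mulVec
          (fun x => if x = (k, k) then (1 : ℂ) else 0) =
        ((((1 - c) * a k + c) ^ 2 +
            (1 - c) ^ 2 * ∑ j ∈ Finset.univ \ {k}, a j ^ 2 : ℝ) : ℂ) •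
          (fun x => if x = (k, k) then (1 : ℂ) else 0)) ∧
    (∀ j k : Fin d, j < k → ∀ s : ℂ, s = 1 ∨ s = -1 →
      (((1 - (c : ℂ)) ^ 2 * (∑ i, (a i : ℂ) ^ 2)) •
            (1 : Matrix (Fin d × Fin d) (Fin d × Fin d) ℂ) +
          ((c : ℂ) * (1 - (c : ℂ))) •
            ((1 : Matrix (Fin d) (Fin d) ℂ) ⊗ₖ
                Matrix.diagonal (fun i => (a i : ℂ)) +
              Matrix.diagonal (fun i => (a i : ℂ)) ⊗ₖ
                (1 : Matrix (Fin d) (Fin d) ℂ)) +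
          ((c : ℂ) ^ 2) • swapMat (Fin d)).mulVec
          (fun x => (if x = (j, k) then (1 : ℂ) else if x = (k, j) then s else 0) /
            (Real.sqrt 2 : ℂ)) =
        ((((1 - c) ^ 2 * ∑ i, a i ^ 2 +
              c * (1 - c) * (a j + a k) : ℝ) : ℂ) + s * (c : ℂ) ^ 2) •
          (fun x => (if x = (j, k) then (1 : ℂ) else if x = (k, j) then s else 0) /
            (Real.sqrt 2 : ℂ))) := by
  constructor
  · intro k
    rw [mulVec_e]
    funext x
    obtain ⟨x1, x2⟩ := x
    have hT : ((∑ j ∈ Finset.univ \ {k}, a j ^ 2 : ℝ) : ℂ)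
        = (∑ j, (a j:ℂ)^2) - (a k:ℂ)^2 := by
      push_cast
      rw [Finset.sum_sdiff_eq_sub (Finset.subset_univ {k})]
      simp
    simp only [Matrix.add_apply, Matrix.smul_apply, Matrix.one_apply,
      Matrix.kroneckerMap_apply, Matrix.diagonal_apply, swapMat, Matrix.of_apply,
      Pi.smul_apply, smul_eq_mul, Prod.mk.injEq]
    by_cases h1 : x1 = k <;> by_cases h2 : x2 = k <;>
      simp [h1, h2, Prod.ext_iff]
    ring
  · intro j k hjk s hs
    have hne : j ≠ k := ne_of_lt hjk
    set M := (((1 - (c : ℂ)) ^ 2 * (∑ i, (a i : ℂ) ^ 2)) •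
              (1 : Matrix (Fin d × Fin d) (Fin d × Fin d) ℂ) +
            ((c : ℂ) * (1 - (c : ℂ))) •
              ((1 : Matrix (Fin d) (Fin d) ℂ) ⊗ₖ
                  Matrix.diagonal (fun i => (a i : ℂ)) +
                Matrix.diagonal (fun i => (a i : ℂ)) ⊗ₖ
                  (1 : Matrix (Fin d) (Fin d) ℂ)) +
            ((c : ℂ) ^ 2) • swapMat (Fin d)) with hM
    have hv : (fun x => (if x = (j, k) then (1 : ℂ) else if x = (k, j) then s else 0) /
              (Real.sqrt 2 : ℂ))
        = ((Real.sqrt 2 : ℂ))⁻¹ • ((fun x => if x = (j,k) then (1:ℂ) else 0)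
            + s • (fun x => if x = (k,j) then (1:ℂ) else 0)) := by
      funext x
      simp only [Pi.smul_apply, Pi.add_apply, smul_eq_mul, div_eq_inv_mul]
      split_ifs with h1 h2 h3 <;> simp_all [Prod.ext_iff]
    rw [hv, Matrix.mulVec_smul, Matrix.mulVec_add, Matrix.mulVec_smul, mulVec_e, mulVec_e]
    funext x
    obtain ⟨x1, x2⟩ := x
    simp only [hM, Matrix.add_apply, Matrix.smul_apply, Matrix.one_apply,
      Matrix.kroneckerMap_apply, Matrix.diagonal_apply, swapMat, Matrix.of_apply,
      Pi.smul_apply, Pi.add_apply, smul_eq_mul, Prod.mk.injEq]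
    by_cases h1 : x1 = j <;> by_cases h2 : x2 = k <;>
      by_cases h3 : x1 = k <;> by_cases h4 : x2 = j <;>
      simp_all [Prod.ext_iff, hne.symm] <;>
      rcases hs with rfl | rfl <;> ring
end

section
/- For the Werner–Holevo channel W_d and every pure state |ψ⟩⟨ψ|, the output W_d(|ψ⟩⟨ψ|) has eigenvalue 1/(d−1) with multiplicity d−1 and eigenvalue 0; consequently the maximal ℓ_p norm is ν_p(W_d) = (d−1)^{(1−p)/p}. -/
open Matrix BigOperators Polynomial
open scoped ComplexOrder

/-- The Werner–Holevo channel `W_d(γ) = ((Tr γ)𝟙 − γᵀ)/(d−1)`. -/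
noncomputable def whChannel (d : ℕ) (γ : Matrix (Fin d) (Fin d) ℂ) :
    Matrix (Fin d) (Fin d) ℂ :=
  ((d : ℂ) - 1)⁻¹ • (γ.trace • (1 : Matrix (Fin d) (Fin d) ℂ) - γᵀ)

/-- The maximal ℓ_p norm `ν_p(ℰ)`, the supremum over density matrices `γ`
of `(Tr[ℰ(γ)^p])^{1/p}`. -/
noncomputable def nu (p : ℕ) {n : Type*} [Fintype n] [DecidableEq n]
    (E : Matrix n n ℂ → Matrix n n ℂ) : ℝ :=
  ⨆ γ : {γ : Matrix n n ℂ // γ.PosSemidef ∧ γ.trace = 1},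
    ((E γ.1 ^ p).trace.re) ^ ((p : ℝ)⁻¹)

/-! The transpose of a pure state `|ψ⟩⟨ψ|` is the rank-one projection `vecMulVec (star ψ) ψ`, so
`W_d(|ψ⟩⟨ψ|)` is the scalar `1/(d-1)` plus a rank-one matrix, whose characteristic polynomial is
read off from that of `vecMulVec`. For an arbitrary density matrix `γ`, diagonalising `γᵀ` with
eigenvalues `μ` in the probability simplex gives
`Tr W_d(γ)^p = ∑ ((1 - μᵢ)/(d-1))^p ≤ (d-1)^{-p} ∑ (1 - μᵢ) = (d-1)^{1-p}`,
and pure states attain the bound because `𝟙 - |ψ̄⟩⟨ψ̄|` is idempotent. -/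

namespace Matrix

variable {n : Type*} [Fintype n]

theorem dotProduct_star_self_eq_sum_norm_sq {𝕜 : Type*} [RCLike 𝕜] (v : n → 𝕜) :
    star v ⬝ᵥ v = ((∑ i, ‖v i‖ ^ 2 : ℝ) : 𝕜) := by
  simp [dotProduct, RCLike.conj_mul]

theorem isIdempotentElem_vecMulVec {R : Type*} [CommRing R] {u v : n → R} (h : v ⬝ᵥ u = 1) :
    IsIdempotentElem (vecMulVec u v) := by
  rw [IsIdempotentElem, vecMulVec_mul_vecMulVec, h, one_smul]

variable [DecidableEq n]

theorem charpoly_scalar_add_vecMulVec {R : Type*} [CommRing R] [Nonempty n] (a : R)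
    (u v : n → R) :
    (scalar n a + vecMulVec u v).charpoly =
      (X - C (a + u ⬝ᵥ v)) * (X - C a) ^ (Fintype.card n - 1) := by
  obtain ⟨k, hk⟩ : ∃ k, Fintype.card n = k + 1 := Nat.exists_eq_add_one.mpr Fintype.card_pos
  rw [add_comm, ← sub_neg_eq_add, ← map_neg, charpoly_sub_scalar, charpoly_vecMulVec, hk,
    Nat.add_sub_cancel, smul_eq_C_mul]
  simp only [mul_comp, pow_comp, sub_comp, X_comp, C_comp, C_add, C_neg]
  ring

theorem trace_pow_smul_one_sub_of_isIdempotentElem {R : Type*} [CommRing R]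
    {N : Matrix n n R} (hN : IsIdempotentElem N) (a : R) {p : ℕ} (hp : p ≠ 0) :
    ((a • (1 - N)) ^ p).trace = a ^ p * (Fintype.card n - N.trace) := by
  obtain ⟨k, rfl⟩ := Nat.exists_eq_succ_of_ne_zero hp
  rw [_root_.smul_pow, hN.one_sub.pow_succ_eq, trace_smul, trace_sub, trace_one, smul_eq_mul]

variable {𝕜 : Type*} [RCLike 𝕜]

theorem IsHermitian.trace_pow_smul_one_sub {B : Matrix n n 𝕜} (hB : B.IsHermitian) (c : ℝ)
    (p : ℕ) :
    (((c : 𝕜) • (1 - B)) ^ p).trace = ((∑ i, (c * (1 - hB.eigenvalues i)) ^ p : ℝ) : 𝕜) := by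
  conv_lhs => rw [hB.spectral_theorem]
  rw [← map_one (Unitary.conjStarAlgAut 𝕜 _ hB.eigenvectorUnitary), ← map_sub, ← map_smul,
    ← map_pow, Unitary.conjStarAlgAut_apply, trace_mul_cycle, Unitary.coe_star_mul_self, one_mul,
    ← diagonal_one, diagonal_sub, ← diagonal_smul, diagonal_pow, trace_diagonal]
  push_cast
  rfl

theorem PosSemidef.eigenvalues_mem_stdSimplex {A : Matrix n n 𝕜} (hA : A.PosSemidef)
    (htr : A.trace = 1) : hA.1.eigenvalues ∈ stdSimplex ℝ n :=
  ⟨hA.eigenvalues_nonneg, by exact_mod_cast hA.1.trace_eq_sum_eigenvalues.symm.trans htr⟩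

end Matrix

theorem sum_mul_one_sub_pow_mem_Icc {ι : Type*} [Fintype ι] {μ : ι → ℝ}
    (hμ : μ ∈ stdSimplex ℝ ι) {c : ℝ} (hc : 0 ≤ c) {p : ℕ} (hp : p ≠ 0) :
    ∑ i, (c * (1 - μ i)) ^ p ∈ Set.Icc 0 (c ^ p * (Fintype.card ι - 1)) := by
  have h01 (i : ι) : 0 ≤ 1 - μ i ∧ 1 - μ i ≤ 1 := by
    have := mem_Icc_of_mem_stdSimplex hμ i
    constructor <;> linarith [this.1, this.2]
  refine ⟨Finset.sum_nonneg fun i _ => pow_nonneg (mul_nonneg hc (h01 i).1) p, ?_⟩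
  calc ∑ i, (c * (1 - μ i)) ^ p
      ≤ ∑ i, c ^ p * (1 - μ i) := Finset.sum_le_sum fun i _ => by
        rw [mul_pow]
        exact mul_le_mul_of_nonneg_left (pow_le_of_le_one (h01 i).1 (h01 i).2 hp) (pow_nonneg hc p)
    _ = c ^ p * (Fintype.card ι - 1) := by
        rw [← Finset.mul_sum, Finset.sum_sub_distrib, hμ.2]
        simp

theorem Real.inv_pow_mul_self_rpow_inv {a : ℝ} (ha : 0 < a) (p : ℕ) :
    (a⁻¹ ^ p * a) ^ (p : ℝ)⁻¹ = a ^ ((1 - (p : ℝ)) / p) := by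
  rw [div_eq_mul_inv, Real.rpow_mul ha.le, Real.rpow_sub ha, Real.rpow_one, Real.rpow_natCast,
    inv_pow, inv_mul_eq_div]

theorem nu_eq_rpow_of_forall_mem_Icc {n : Type*} [Fintype n] [DecidableEq n] {p : ℕ}
    {E : Matrix n n ℂ → Matrix n n ℂ} {M : ℝ}
    (hmem : ∀ γ : Matrix n n ℂ, γ.PosSemidef → γ.trace = 1 → (E γ ^ p).trace.re ∈ Set.Icc 0 M)
    {γ₀ : Matrix n n ℂ} (hγ₀ : γ₀.PosSemidef) (htr₀ : γ₀.trace = 1)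
    (heq : (E γ₀ ^ p).trace.re = M) : nu p E = M ^ (p : ℝ)⁻¹ := by
  have hle (γ : {γ : Matrix n n ℂ // γ.PosSemidef ∧ γ.trace = 1}) :
      (E γ.1 ^ p).trace.re ^ (p : ℝ)⁻¹ ≤ M ^ (p : ℝ)⁻¹ :=
    have h := hmem γ.1 γ.2.1 γ.2.2
    Real.rpow_le_rpow h.1 h.2 (by positivity)
  have : Nonempty {γ : Matrix n n ℂ // γ.PosSemidef ∧ γ.trace = 1} := ⟨⟨γ₀, hγ₀, htr₀⟩⟩
  exact le_antisymm (ciSup_le hle)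
    (le_ciSup_of_le ⟨_, Set.forall_mem_range.2 hle⟩ ⟨γ₀, hγ₀, htr₀⟩ (by rw [heq]))

section WernerHolevo

variable {d : ℕ}

theorem whChannel_of_trace_eq_one {γ : Matrix (Fin d) (Fin d) ℂ} (h : γ.trace = 1) :
    whChannel d γ = ((d : ℂ) - 1)⁻¹ • (1 - γᵀ) := by
  rw [whChannel, h, one_smul]

theorem re_trace_whChannel_pow_mem_Icc (hd : 1 ≤ d) {p : ℕ} (hp : p ≠ 0)
    {γ : Matrix (Fin d) (Fin d) ℂ} (hγ : γ.PosSemidef) (htr : γ.trace = 1) :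
    (whChannel d γ ^ p).trace.re ∈ Set.Icc 0 (((d : ℝ) - 1)⁻¹ ^ p * ((d : ℝ) - 1)) := by
  have hc : ((d : ℂ) - 1)⁻¹ = ((((d : ℝ) - 1)⁻¹ : ℝ) : ℂ) := by push_cast; rfl
  have hc0 : (0 : ℝ) ≤ ((d : ℝ) - 1)⁻¹ := inv_nonneg.2 (sub_nonneg.2 (by exact_mod_cast hd))
  rw [whChannel_of_trace_eq_one htr, hc, ← RCLike.ofReal_eq_complex_ofReal,
    hγ.transpose.1.trace_pow_smul_one_sub, RCLike.ofReal_eq_complex_ofReal, Complex.ofReal_re]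
  simpa using sum_mul_one_sub_pow_mem_Icc
    (hγ.transpose.eigenvalues_mem_stdSimplex (by rw [trace_transpose, htr])) hc0 hp

variable {ψ : Fin d → ℂ}

theorem whChannel_vecMulVec_self_star (hψ : star ψ ⬝ᵥ ψ = 1) :
    whChannel d (vecMulVec ψ (star ψ)) =
      scalar (Fin d) ((d : ℂ) - 1)⁻¹ + vecMulVec (-((d : ℂ) - 1)⁻¹ • star ψ) ψ := by
  rw [whChannel_of_trace_eq_one (by rw [trace_vecMulVec, dotProduct_comm, hψ]),
    transpose_vecMulVec, smul_sub, sub_eq_add_neg, smul_vecMulVec, neg_smul, ← smul_vecMulVec]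
  simp [smul_one_eq_diagonal]

theorem charpoly_whChannel_vecMulVec_self_star [NeZero d] (hψ : star ψ ⬝ᵥ ψ = 1) :
    (whChannel d (vecMulVec ψ (star ψ))).charpoly = X * (X - C ((d : ℂ) - 1)⁻¹) ^ (d - 1) := by
  rw [whChannel_vecMulVec_self_star hψ, charpoly_scalar_add_vecMulVec, Fintype.card_fin,
    smul_dotProduct, hψ]
  simp

theorem trace_whChannel_vecMulVec_self_star_pow (hψ : star ψ ⬝ᵥ ψ = 1) {p : ℕ} (hp : p ≠ 0) :
    (whChannel d (vecMulVec ψ (star ψ)) ^ p).trace =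
      ((((d : ℝ) - 1)⁻¹ ^ p * ((d : ℝ) - 1) : ℝ) : ℂ) := by
  rw [whChannel_of_trace_eq_one (by rw [trace_vecMulVec, dotProduct_comm, hψ]),
    transpose_vecMulVec, trace_pow_smul_one_sub_of_isIdempotentElem
      (isIdempotentElem_vecMulVec (by rw [dotProduct_comm, hψ])) _ hp,
    trace_vecMulVec, hψ, Fintype.card_fin]
  push_cast
  rfl

end WernerHolevo

/-- For every pure state `|ψ⟩⟨ψ|`, the output `W_d(|ψ⟩⟨ψ|)` has eigenvalue
`1/(d−1)` with multiplicity `d−1` and eigenvalue `0`; consequently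
`ν_p(W_d) = (d−1)^{(1−p)/p}`. -/
theorem wernerHolevo_pure_output (d p : ℕ) (hd : 2 ≤ d) (hp : 0 < p)
    (ψ : Fin d → ℂ) (hψ : ∑ i, ‖ψ i‖ ^ 2 = 1) :
    (whChannel d (Matrix.vecMulVec ψ (star ψ))).charpoly =
        X * (X - C (((d : ℂ) - 1)⁻¹)) ^ (d - 1) ∧
      nu p (whChannel d) = ((d : ℝ) - 1) ^ ((1 - (p : ℝ)) / (p : ℝ)) := by
  have : NeZero d := ⟨by omega⟩
  have hψ' : star ψ ⬝ᵥ ψ = 1 := by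
    rw [dotProduct_star_self_eq_sum_norm_sq, hψ, RCLike.ofReal_one]
  refine ⟨charpoly_whChannel_vecMulVec_self_star hψ', ?_⟩
  have hd' : (0 : ℝ) < d - 1 := by
    have : (2 : ℝ) ≤ d := by exact_mod_cast hd
    linarith
  rw [← Real.inv_pow_mul_self_rpow_inv hd']
  refine nu_eq_rpow_of_forall_mem_Icc
    (fun γ hγ htr => re_trace_whChannel_pow_mem_Icc (by omega) hp.ne' hγ htr)
    (posSemidef_vecMulVec_self_star ψ) (by rw [trace_vecMulVec, dotProduct_comm, hψ']) ?_
  rw [trace_whChannel_vecMulVec_self_star_pow hψ' hp.ne', Complex.ofReal_re]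
end

section
/- For p = 3 and d ≥ 4, the 6×6 matrix F = (d−3)𝟙₆ + [[−L₃, V],[V, −L₃]] (with L₃ the 3×3 cyclic shift matrix and V the 3×3 all-ones matrix) satisfies: the eigenvalues of F†F are d²−5d+7 (multiplicity 4), (d−7)², and (d−1)²; hence for d ≥ 4 the largest singular value of F is d−1. -/
open Matrix Polynomial

/-- The 3×3 cyclic shift permutation matrix `L₃`. -/
noncomputable def L3 : Matrix (Fin 3) (Fin 3) ℂ :=
  Matrix.of fun i j => if i = j + 1 then 1 else 0

/-- The 3×3 all-ones matrix `V`. -/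
noncomputable def V3 : Matrix (Fin 3) (Fin 3) ℂ :=
  Matrix.of fun _ _ => 1

/-- The 6×6 block matrix `F = (d−3)𝟙₆ + [[−L₃, V],[V, −L₃]]`. -/
noncomputable def Fmat (d : ℕ) : Matrix (Fin 3 ⊕ Fin 3) (Fin 3 ⊕ Fin 3) ℂ :=
  ((d : ℂ) - 3) • 1 + Matrix.fromBlocks (-L3) V3 V3 (-L3)

/-!
`F = [[A, V], [V, A]]` with `A = (d - 3)𝟙 - L₃`. For such block-symmetric matrices the change of
basis `(x, y) ↦ (x + y, x - y)` splits `FᴴF` into `(A + V)ᴴ(A + V)` and `(A - V)ᴴ(A - V)`, and both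
are `3 × 3` matrices of the form `a𝟙 + bV`, whose eigenvalues are `a` (twice) and `a + 3b`.
With the `ℓ²` operator norm the matrices form a C⋆-algebra, so `‖F‖² = ‖FᴴF‖` is the spectral
radius of the self-adjoint `FᴴF`, i.e. its largest eigenvalue `(d - 1)²` once `d ≥ 4`.
-/

namespace Matrix

variable {n R : Type*} [Fintype n] [CommRing R]

theorem conjTranspose_mul_fromBlocks_self [StarRing R] (A B : Matrix n n R) :
    (fromBlocks A B B A)ᴴ * fromBlocks A B B A =
      fromBlocks (Aᴴ * A + Bᴴ * B) (Aᴴ * B + Bᴴ * A) (Aᴴ * B + Bᴴ * A) (Aᴴ * A + Bᴴ * B) := by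
  simp [fromBlocks_conjTranspose, fromBlocks_multiply, add_comm]

variable [DecidableEq n]

theorem det_fromBlocks_self (A B : Matrix n n R) :
    (fromBlocks A B B A).det = (A + B).det * (A - B).det := by
  have h : fromBlocks A B B A =
      fromBlocks 1 0 1 1 * fromBlocks (A + B) B 0 (A - B) * fromBlocks 1 0 (-1) 1 := by
    simp [fromBlocks_multiply]
  rw [h, det_mul, det_mul, det_fromBlocks_zero₁₂, det_fromBlocks_zero₂₁, det_fromBlocks_zero₁₂]
  simp

theorem charpoly_fromBlocks_self (A B : Matrix n n R) :
    (fromBlocks A B B A).charpoly = (A + B).charpoly * (A - B).charpoly := by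
  rw [charpoly, charmatrix_fromBlocks, det_fromBlocks_self, charpoly, charpoly]
  congr 2 <;> ext i j <;> by_cases h : i = j <;> simp [h] <;> ring

theorem charpoly_conjTranspose_mul_fromBlocks_self [StarRing R] (A B : Matrix n n R) :
    ((fromBlocks A B B A)ᴴ * fromBlocks A B B A).charpoly =
      ((A + B)ᴴ * (A + B)).charpoly * ((A - B)ᴴ * (A - B)).charpoly := by
  rw [conjTranspose_mul_fromBlocks_self, charpoly_fromBlocks_self]
  congr 2 <;>
    simp only [conjTranspose_add, conjTranspose_sub, add_mul, mul_add, sub_mul, mul_sub] <;> abel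

end Matrix

theorem toReal_spectralRadius_eq_of_isGreatest {𝕜 A : Type*} [NormedField 𝕜] [Ring A]
    [Algebra 𝕜 A] {a : A} {r : ℝ} (h : IsGreatest (norm '' spectrum 𝕜 a) r) :
    (spectralRadius 𝕜 a).toReal = r := by
  obtain ⟨⟨k, hk, rfl⟩, hmax⟩ := h
  suffices spectralRadius 𝕜 a = ‖k‖₊ by simp [this]
  refine le_antisymm (iSup₂_le fun l hl => ?_) (le_iSup₂ (α := ENNReal) k hk)
  exact_mod_cast hmax ⟨l, hl, rfl⟩

open scoped Matrix.Norms.L2Operator in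
theorem Matrix.norm_toEuclideanCLM_eq_of_isGreatest {n : Type*} [Fintype n] [DecidableEq n]
    {A : Matrix n n ℂ} {σ : ℝ} (hσ : 0 ≤ σ)
    (h : IsGreatest (norm '' spectrum ℂ (Aᴴ * A)) (σ ^ 2)) :
    ‖toEuclideanCLM (𝕜 := ℂ) A‖ = σ := by
  have hsq := CStarAlgebra.toReal_spectralRadius_star_mul_self_eq_norm_sq A
  rw [star_eq_conjTranspose, toReal_spectralRadius_eq_of_isGreatest h] at hsq
  rw [← cstar_norm_def]
  exact (pow_left_inj₀ (norm_nonneg _) hσ two_ne_zero).mp hsq.symm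

-- The formula comes from `L₃ᴴL₃ = 𝟙`, `L₃ + L₃ᴴ = V - 𝟙` and `V² = 3V`.
theorem conjTranspose_mul_self_smul_one_sub_L3_add_smul_V3 (c s : ℝ) :
    ((c : ℂ) • 1 - L3 + (s : ℂ) • V3)ᴴ * ((c : ℂ) • 1 - L3 + (s : ℂ) • V3) =
      ((c ^ 2 + c + 1 : ℝ) : ℂ) • 1 + ((3 * s ^ 2 + 2 * c * s - 2 * s - c : ℝ) : ℂ) • V3 := by
  ext i j
  fin_cases i <;> fin_cases j <;> simp [mul_apply, Fin.sum_univ_three, L3, V3, one_apply] <;> ring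

theorem charpoly_smul_one_add_smul_V3 (a b : ℂ) :
    (a • (1 : Matrix (Fin 3) (Fin 3) ℂ) + b • V3).charpoly =
      (X - C a) ^ 2 * (X - C (a + 3 * b)) := by
  simp only [charpoly, det_fin_three, charmatrix_apply, V3]
  simp [Fin.ext_iff, map_ofNat]
  ring

theorem Fmat_eq_fromBlocks (d : ℕ) :
    Fmat d = fromBlocks (((d : ℂ) - 3) • 1 - L3) V3 V3 (((d : ℂ) - 3) • 1 - L3) := by
  simp [Fmat, ← fromBlocks_one, fromBlocks_smul, fromBlocks_add, sub_eq_add_neg]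

theorem charpoly_conjTranspose_mul_Fmat (d : ℕ) :
    ((Fmat d)ᴴ * Fmat d).charpoly =
        (X - C ((d : ℂ) ^ 2 - 5 * d + 7)) ^ 4 *
          (X - C (((d : ℂ) - 7) ^ 2)) * (X - C (((d : ℂ) - 1) ^ 2)) := by
  have hc : (d : ℂ) - 3 = ((d - 3 : ℝ) : ℂ) := by push_cast; ring
  have hplus : ((d - 3 : ℝ) : ℂ) • 1 - L3 + V3 =
      ((d - 3 : ℝ) : ℂ) • 1 - L3 + ((1 : ℝ) : ℂ) • V3 := by
    simp
  have hminus : ((d - 3 : ℝ) : ℂ) • 1 - L3 - V3 =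
      ((d - 3 : ℝ) : ℂ) • 1 - L3 + ((-1 : ℝ) : ℂ) • V3 := by
    simp [sub_eq_add_neg]
  rw [Fmat_eq_fromBlocks, charpoly_conjTranspose_mul_fromBlocks_self, hc, hplus, hminus,
    conjTranspose_mul_self_smul_one_sub_L3_add_smul_V3,
    conjTranspose_mul_self_smul_one_sub_L3_add_smul_V3,
    charpoly_smul_one_add_smul_V3, charpoly_smul_one_add_smul_V3]
  push_cast
  ring_nf

theorem spectrum_conjTranspose_mul_Fmat (d : ℕ) :
    spectrum ℂ ((Fmat d)ᴴ * Fmat d) =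
      {((d ^ 2 - 5 * d + 7 : ℝ) : ℂ), (((d - 7) ^ 2 : ℝ) : ℂ), (((d - 1) ^ 2 : ℝ) : ℂ)} := by
  ext x
  rw [mem_spectrum_iff_isRoot_charpoly, charpoly_conjTranspose_mul_Fmat]
  push_cast
  simp [sub_eq_zero, or_assoc]

/-- For `d ≥ 4`:  the eigenvalues of `F†F` are `d²−5d+7` (multiplicity 4),
`(d−7)²` and `(d−1)²`; hence the largest singular value of `F` is `d−1`. -/
theorem Fmat_singular_values (d : ℕ) (hd : 4 ≤ d) :
    ((Fmat d)ᴴ * Fmat d).charpoly =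
        (X - C ((d : ℂ) ^ 2 - 5 * d + 7)) ^ 4 *
          (X - C (((d : ℂ) - 7) ^ 2)) * (X - C (((d : ℂ) - 1) ^ 2)) ∧
      ‖Matrix.toEuclideanCLM (𝕜 := ℂ) (Fmat d)‖ = (d : ℝ) - 1 := by
  have hd' : (4 : ℝ) ≤ d := by exact_mod_cast hd
  refine ⟨charpoly_conjTranspose_mul_Fmat d,
    norm_toEuclideanCLM_eq_of_isGreatest (by linarith) ?_⟩
  rw [spectrum_conjTranspose_mul_Fmat, Set.image_insert_eq, Set.image_insert_eq,
    Set.image_singleton]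
  simp only [Complex.norm_real, Real.norm_eq_abs, abs_sq]
  refine ⟨by simp, ?_⟩
  rintro _ (rfl | rfl | rfl)
  · rw [abs_of_nonneg (by nlinarith)]
    nlinarith
  · nlinarith
  · exact le_rfl
end
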